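/- Let 𝓑 be a downward-closed collection of subsets of finite Π satisfying the Byzantine fault predicate and 𝓖 = {Π \ B : B ∈ 𝓑}. If two 'echo quorums' G₁, G₂ ∈ 𝓖 each unanimously support values v₁ and v₂ respectively, and every processor outside a fixed B* ∈ 𝓑 supports at most one value, then v₁ = v₂. -/

import Mathlib

theorem Finset.exists_notMem_of_not_univ_subset_union {P : Type*} [Fintype P] [DecidableEq P]
    {A B C : Finset P} (h : ¬ (Finset.univ : Finset P) ⊆ A ∪ B ∪ C) :
    ∃ p, p ∉ A ∧ p ∉ B ∧ p ∉ C := by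
  obtain ⟨p, -, hp⟩ := Finset.not_subset.mp h
  simp only [Finset.mem_union, not_or] at hp
  exact ⟨p, hp.1.1, hp.1.2, hp.2⟩

theorem generalized_echo_quorum_agreement_general
    {P : Type*} [Fintype P] [DecidableEq P] {V : Type*}
    (𝓑 : Set (Finset P))
    (hbyz : ∀ B₁ ∈ 𝓑, ∀ B₂ ∈ 𝓑, ∀ B₃ ∈ 𝓑,
      ¬ (Finset.univ : Finset P) ⊆ B₁ ∪ B₂ ∪ B₃)
    (Bstar : Finset P) (hBstar : Bstar ∈ 𝓑)
    (support : P → Option V)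
    (B₁ B₂ : Finset P) (hB₁ : B₁ ∈ 𝓑) (hB₂ : B₂ ∈ 𝓑)
    (v₁ v₂ : V)
    (h1 : ∀ p ∈ (Finset.univ \ B₁ : Finset P), p ∉ Bstar → support p = some v₁)
    (h2 : ∀ p ∈ (Finset.univ \ B₂ : Finset P), p ∉ Bstar → support p = some v₂) :
    v₁ = v₂ := by
  obtain ⟨p, hp₁, hp₂, hp⟩ :=
    Finset.exists_notMem_of_not_univ_subset_union (hbyz B₁ hB₁ B₂ hB₂ Bstar hBstar)
  have hv₁ : support p = some v₁ := h1 p (Finset.mem_sdiff.mpr ⟨Finset.mem_univ p, hp₁⟩) hp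
  have hv₂ : support p = some v₂ := h2 p (Finset.mem_sdiff.mpr ⟨Finset.mem_univ p, hp₂⟩) hp
  exact Option.some_injective V (hv₁.symm.trans hv₂)

theorem generalized_echo_quorum_agreement
    {P : Type*} [Fintype P] [DecidableEq P] {V : Type*}
    (𝓑 : Set (Finset P))
    (hdc : ∀ B ∈ 𝓑, ∀ B' : Finset P, B' ⊆ B → B' ∈ 𝓑)
    (hbyz : ∀ B₁ ∈ 𝓑, ∀ B₂ ∈ 𝓑, ∀ B₃ ∈ 𝓑,
      ¬ (Finset.univ : Finset P) ⊆ B₁ ∪ B₂ ∪ B₃)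
    (Bstar : Finset P) (hBstar : Bstar ∈ 𝓑)
    (support : P → Option V)
    (B₁ B₂ : Finset P) (hB₁ : B₁ ∈ 𝓑) (hB₂ : B₂ ∈ 𝓑)
    (v₁ v₂ : V)
    (h1 : ∀ p ∈ (Finset.univ \ B₁ : Finset P), p ∉ Bstar → support p = some v₁)
    (h2 : ∀ p ∈ (Finset.univ \ B₂ : Finset P), p ∉ Bstar → support p = some v₂) :
    v₁ = v₂ :=
  generalized_echo_quorum_agreement_general 𝓑 hbyz Bstar hBstar support B₁ B₂ hB₁ hB₂ v₁ v₂ h1 h2
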